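/- The eigenspace ker(A_c^ZB − u·I) of the 3×3 real matrix A_c^ZB for the eigenvalue u is exactly the two-dimensional span of the vectors (1, u, 0) and (0, 0, 1); in particular, since u has algebraic multiplicity 3, A_c^ZB does not have a complete set of linearly independent eigenvectors (the convection subsystem is weakly hyperbolic). -/
import Mathlib


/-- The Zha–Bilgen convection flux Jacobian of the 1-D Euler system. -/
noncomputable def AcZB (u E : ℝ) : Matrix (Fin 3) (Fin 3) ℝ :=
  !![0, 1, 0;
     -u^2, 2*u, 0;
     -u*E, E, u]

/-- The eigenspace of `A_c^ZB` for the eigenvalue `u` is exactly the two-dimensional span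
of `(1, u, 0)` and `(0, 0, 1)`; since `u` has algebraic multiplicity 3, `A_c^ZB` does not
have a complete set of linearly independent eigenvectors. -/
theorem eigenspace_AcZB (u E : ℝ) :
    (∀ x : Fin 3 → ℝ, (AcZB u E).mulVec x = u • x ↔
      ∃ c d : ℝ, x = c • ![1, u, 0] + d • ![0, 0, 1]) ∧
    LinearIndependent ℝ ![![(1:ℝ), u, 0], ![0, 0, 1]] := by
  constructor
  · intro x
    constructor
    · intro h
      have h0 := congrFun h 0
      refine ⟨x 0, x 2, ?_⟩
      funext i
      fin_cases i <;>
        simp_all [AcZB, Matrix.mulVec, dotProduct, Fin.sum_univ_three] <;> ring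
    · rintro ⟨c, d, rfl⟩
      funext i
      fin_cases i <;>
        · simp [AcZB, Matrix.mulVec, dotProduct, Fin.sum_univ_three]
          ring
  · rw [LinearIndependent.pair_iff]
    intro s t h
    have h0 := congrFun h 0
    have h2 := congrFun h 2
    simp at h0 h2
    exact ⟨h0, h2⟩
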